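/- arXiv:quant-ph/0506062 — 2 statements merged into one kernel-verified Lean document; each statement's English description precedes it below -/
import Mathlib

section
/- A flow function of an open graph state is injective: if (f, >) is a flow on (G, I, O), then f : O^c → I^c is one-to-one. -/
/-- A flow `(f, <)` on an open graph state `(G, I, O)`:
`f` maps measured qubits (`Oᶜ`) to prepared qubits (`Iᶜ`), `lt` is a strict
partial order, (F0) `f i` is adjacent to `i`, (F1) `f i > i`,
(F2) every neighbour `k ≠ i` of `f i` satisfies `k > i`. -/
structure GraphFlow {V : Type*} (G : SimpleGraph V) (I O : Set V) where
  f : V → V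
  lt : V → V → Prop
  lt_irrefl : ∀ v, ¬ lt v v
  lt_trans : ∀ u v w, lt u v → lt v w → lt u w
  maps_into : ∀ i ∉ O, f i ∉ I
  F0 : ∀ i ∉ O, G.Adj i (f i)
  F1 : ∀ i ∉ O, lt i (f i)
  F2 : ∀ i ∉ O, ∀ k, G.Adj (f i) k → k ≠ i → lt i k

/-- a flow function is one-to-one on the measured qubits `Oᶜ`. -/
theorem flow_function_injective {V : Type*} (G : SimpleGraph V) (I O : Set V)
    (F : GraphFlow G I O) :
    ∀ i ∉ O, ∀ j ∉ O, F.f i = F.f j → i = j := by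
  intro i hi j hj hf
  by_contra hne
  have h1 : F.lt i j := F.F2 i hi j (hf ▸ (F.F0 j hj).symm) (Ne.symm hne)
  have h2 : F.lt j i := F.F2 j hj i (hf ▸ (F.F0 i hi).symm) hne
  exact F.lt_irrefl i (F.lt_trans i j i h1 h2)
end

section
/- If an open graph state (G, I, O) has a flow, then |I| ≤ |O|. Consequently, if both (G, I, O) and (G, O, I) have flows (a bi-flow), then |I| = |O|. -/
lemma flow_aux {V : Type*} [Fintype V] [DecidableEq V]
    (G : SimpleGraph V) (I O : Finset V)
    (fl : GraphFlow G (↑I : Set V) (↑O : Set V)) : I.card ≤ O.card := by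
  have hinj : Set.InjOn fl.f ↑(Oᶜ) := by
    intro i hi j hj hij
    simp only [Finset.coe_compl, Set.mem_compl_iff, Finset.mem_coe] at hi hj
    by_contra hne
    have h1 : fl.lt i j := by
      apply fl.F2 i hi j _ (Ne.symm hne)
      rw [hij]; exact (fl.F0 j hj).symm
    have h2 : fl.lt j i := by
      apply fl.F2 j hj i _ hne
      rw [← hij]; exact (fl.F0 i hi).symm
    exact fl.lt_irrefl i (fl.lt_trans i j i h1 h2)
  have hmaps : ∀ i ∈ Oᶜ, fl.f i ∈ Iᶜ := by
    intro i hi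
    simp only [Finset.mem_compl] at hi ⊢
    intro h
    exact fl.maps_into i (by simpa using hi) (by simpa using h)
  have hcard : (Oᶜ : Finset V).card ≤ (Iᶜ : Finset V).card :=
    Finset.card_le_card_of_injOn fl.f hmaps hinj
  have h1 := Finset.card_compl O
  have h2 := Finset.card_compl I
  have h3 := Finset.card_le_univ O
  have h4 := Finset.card_le_univ I
  omega

/-- a flow on `(G, I, O)` forces `|I| ≤ |O|`; consequently a
bi-flow (flows on `(G, I, O)` and on `(G, O, I)`) forces `|I| = |O|`. -/
theorem flow_card_inputs_le_outputs {V : Type*} [Fintype V] [DecidableEq V]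
    (G : SimpleGraph V) (I O : Finset V) :
    (GraphFlow G (↑I : Set V) (↑O : Set V) → I.card ≤ O.card) ∧
    (GraphFlow G (↑I : Set V) (↑O : Set V) →
      GraphFlow G (↑O : Set V) (↑I : Set V) → I.card = O.card) := by
  exact ⟨fun fl => flow_aux G I O fl,
    fun fl1 fl2 => le_antisymm (flow_aux G I O fl1) (flow_aux G O I fl2)⟩
end
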